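/- It suffices to prove hypercube expansion by one variable: if f : Bool^n → Bool depends on all its variables, S is a proper subset of the variables, and f has a relevance hypercube for S, then there exists a variable x ∉ S such that f has a relevance hypercube for S ∪ {x}. -/

import Mathlib

/-- A Boolean function `f` depends on variable `i`. -/
def BoolFunDependsOn {ι : Type*} (f : (ι → Bool) → Bool) (i : ι) : Prop :=
  ∃ a b : ι → Bool, (∀ j, j ≠ i → a j = b j) ∧ f a ≠ f b

/-- The projection of `f` obtained by fixing all variables outside `S`
to the values given by `p`. -/
def Restrict {n : ℕ} (f : (Fin n → Bool) → Bool) (S : Finset (Fin n))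
    (p : Fin n → Bool) : (Fin n → Bool) → Bool :=
  fun x => f fun j => if j ∈ S then x j else p j

/-- `p` determines a relevance hypercube for `S`: the induced projection
depends on every variable of `S`. -/
def IsRelHypercube {n : ℕ} (f : (Fin n → Bool) → Bool) (S : Finset (Fin n))
    (p : Fin n → Bool) : Prop :=
  ∀ i ∈ S, BoolFunDependsOn (Restrict f S p) i

/-!
Fix `x ∉ S` and a pair `a, b` witnessing that `f` depends on `x`. Walk from `p` to `a`,
changing one coordinate `y` outside `S` at a time. If some step changes the projection onto
`S`, then the current assignment is already a relevance hypercube for `S ∪ {y}`; otherwise the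
projection never changes, so `a` is a relevance hypercube for `S`, and flipping `x` at `a`
changes its projection, which makes `a` a relevance hypercube for `S ∪ {x}`.
-/

open Function

section DependsOn

variable {ι : Type*} [DecidableEq ι] {g : (ι → Bool) → Bool}

theorem boolFunDependsOn_of_update_ne {i : ι} {u : ι → Bool} {c d : Bool}
    (h : g (update u i c) ≠ g (update u i d)) : BoolFunDependsOn g i :=
  ⟨update u i c, update u i d, fun j hj => by simp only [update_of_ne hj], h⟩

theorem BoolFunDependsOn.of_comp_update {i y : ι} {c : Bool}
    (h : BoolFunDependsOn (fun u => g (update u y c)) i) : BoolFunDependsOn g i := by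
  obtain ⟨a, b, hab, hne⟩ := h
  refine ⟨update a y c, update b y c, fun j hj => ?_, hne⟩
  rcases eq_or_ne j y with rfl | hjy
  · simp only [update_self]
  · simp only [update_of_ne hjy, hab j hj]

end DependsOn

section Hypercube

variable {n : ℕ} {f : (Fin n → Bool) → Bool} {S : Finset (Fin n)}

theorem restrict_congr {p q : Fin n → Bool} (h : ∀ j ∉ S, p j = q j) :
    Restrict f S p = Restrict f S q := by
  funext u
  simp only [Restrict]
  congr 1
  funext j
  split_ifs with hj
  · rfl
  · exact h j hj

theorem restrict_apply_congr {q u w : Fin n → Bool} (h : ∀ j ∈ S, u j = w j) :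
    Restrict f S q u = Restrict f S q w := by
  simp only [Restrict]
  congr 1
  funext j
  split_ifs with hj
  · exact h j hj
  · rfl

theorem restrict_apply_self (q : Fin n → Bool) : Restrict f S q q = f q := by
  simp only [Restrict, ite_self]

theorem restrict_insert_update {y : Fin n} (hy : y ∉ S) (q u : Fin n → Bool) (v : Bool) :
    Restrict f (insert y S) q (update u y v) = Restrict f S (update q y v) u := by
  simp only [Restrict]
  congr 1
  funext j
  rcases eq_or_ne j y with rfl | hjy
  · simp [hy]
  · by_cases hjS : j ∈ S <;> simp [hjS, hjy]

theorem IsRelHypercube.of_restrict_eq {p q : Fin n → Bool} (hp : IsRelHypercube f S p)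
    (h : Restrict f S p = Restrict f S q) : IsRelHypercube f S q :=
  fun i hi => h ▸ hp i hi

theorem IsRelHypercube.insert_of_restrict_update_ne {q : Fin n → Bool} {y : Fin n} {v : Bool}
    (hq : IsRelHypercube f S q) (hy : y ∉ S)
    (hne : Restrict f S q ≠ Restrict f S (update q y v)) :
    IsRelHypercube f (insert y S) q := by
  have hfix : Restrict f S q = fun u => Restrict f (insert y S) q (update u y (q y)) := by
    funext u
    rw [restrict_insert_update hy, update_eq_self]
  intro i hi
  rcases Finset.mem_insert.mp hi with rfl | hiS
  · obtain ⟨u, hu⟩ := ne_iff.mp hne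
    refine boolFunDependsOn_of_update_ne (u := u) (c := q i) (d := v) ?_
    rwa [restrict_insert_update hy, restrict_insert_update hy, update_eq_self]
  · exact BoolFunDependsOn.of_comp_update (hfix ▸ hq i hiS)

theorem IsRelHypercube.exists_insert_or {q : Fin n → Bool} (hq : IsRelHypercube f S q)
    (r : Fin n → Bool) :
    (∃ y ∉ S, ∃ p, IsRelHypercube f (insert y S) p) ∨ IsRelHypercube f S r := by
  suffices walk : ∀ (T : Finset (Fin n)) (q : Fin n → Bool), IsRelHypercube f S q →
      (∀ j ∉ T, q j = r j) →
      (∃ y ∉ S, ∃ p, IsRelHypercube f (insert y S) p) ∨ IsRelHypercube f S r from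
    walk Finset.univ q hq fun j hj => absurd (Finset.mem_univ j) hj
  intro T
  induction T using Finset.induction_on with
  | empty =>
    intro q hq hqr
    right
    rwa [← funext fun j => hqr j (Finset.notMem_empty j)]
  | insert y T _ ih =>
    intro q hq hqr
    have hq'r : ∀ j ∉ T, update q y (r y) j = r j := by
      intro j hj
      rcases eq_or_ne j y with rfl | hjy
      · exact update_self ..
      · rw [update_of_ne hjy]
        exact hqr j (by simp [hjy, hj])
    by_cases hstep : Restrict f S q = Restrict f S (update q y (r y))
    · exact ih _ (hq.of_restrict_eq hstep) hq'r
    · have hy : y ∉ S := fun hy =>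
        hstep (restrict_congr fun j hj => (update_of_ne (ne_of_mem_of_not_mem hy hj).symm ..).symm)
      exact Or.inl ⟨y, hy, q, hq.insert_of_restrict_update_ne hy hstep⟩

end Hypercube

/-- Hypercube expansion by one variable. -/
theorem stmt3 {n : ℕ} (f : (Fin n → Bool) → Bool) (hf : ∀ i, BoolFunDependsOn f i)
    (S : Finset (Fin n)) (hS : S ≠ Finset.univ)
    (p : Fin n → Bool) (hp : IsRelHypercube f S p) :
    ∃ x ∉ S, ∃ p', IsRelHypercube f (insert x S) p' := by
  obtain ⟨x, hx⟩ : ∃ x, x ∉ S := by simpa [Finset.eq_univ_iff_forall] using hS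
  obtain ⟨a, b, hab, hfab⟩ := hf x
  rcases hp.exists_insert_or a with hexp | ha
  · exact hexp
  have hb : update a x (b x) = b := update_eq_iff.mpr ⟨rfl, hab⟩
  refine ⟨x, hx, a, ha.insert_of_restrict_update_ne hx (v := b x) ?_⟩
  rw [hb]
  intro hrestrict
  apply hfab
  calc f a = Restrict f S a a := (restrict_apply_self a).symm
    _ = Restrict f S b a := congrFun hrestrict a
    _ = Restrict f S b b := restrict_apply_congr fun j hj => hab j (ne_of_mem_of_not_mem hj hx)
    _ = f b := restrict_apply_self b
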